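/- arXiv:2305.04907 — 2 statements merged into one kernel-verified Lean document; each statement's English description precedes it below -/
import Mathlib

section
/- Let S be a blocking semioval with exactly 25 points in PG(2,11) having a 10-secant line ℓ, and let Q and R be the two points of ℓ not in S. Then for every point P of S not on ℓ, the unique tangent line to S at P passes through Q or through R. -/
instance : Fact (Nat.Prime 11) := ⟨by norm_num⟩

/-- The points of `PG(2,11)`: the projectivization of `(ZMod 11)^3`. -/
abbrev PGPoint : Type := Projectivization (ZMod 11) (Fin 3 → ZMod 11)

/-- The lines of `PG(2,11)`: the 2-dimensional subspaces of `(ZMod 11)^3`. -/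
abbrev PGLine : Type :=
  {W : Submodule (ZMod 11) (Fin 3 → ZMod 11) // Module.finrank (ZMod 11) W = 2}

/-- Incidence: a point lies on a line when its representing 1-dimensional
subspace is contained in the line's 2-dimensional subspace. -/
def PGmem (P : PGPoint) (L : PGLine) : Prop := Projectivization.submodule P ≤ L.val

/-- The set of points lying on a line. -/
def linePts (L : PGLine) : Set PGPoint := {P | PGmem P L}

/-- The set of points of `S` lying on the line `L`. -/
def secantPts (S : Set PGPoint) (L : PGLine) : Set PGPoint := {P ∈ S | PGmem P L}

/-- A line is a `k`-secant to `S` if it meets `S` in exactly `k` points. -/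
def IsSecant (S : Set PGPoint) (k : ℕ) (L : PGLine) : Prop := (secantPts S L).ncard = k

/-- A tangent line to `S` is a 1-secant. -/
def IsTangent (S : Set PGPoint) (L : PGLine) : Prop := IsSecant S 1 L

/-- A blocking set: every line meets `S`, but `S` contains no line. -/
def IsBlockingSet (S : Set PGPoint) : Prop :=
  (∀ L : PGLine, (secantPts S L).Nonempty) ∧ ∀ L : PGLine, ¬ linePts L ⊆ S

/-- A semioval: every point of `S` lies on exactly one tangent line to `S`. -/
def IsSemioval (S : Set PGPoint) : Prop :=
  ∀ P ∈ S, ∃! L : PGLine, PGmem P L ∧ IsTangent S L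

/-- A blocking semioval is both a blocking set and a semioval. -/
def IsBlockingSemioval (S : Set PGPoint) : Prop := IsBlockingSet S ∧ IsSemioval S

/-! The tangent `t` at `P` meets `ℓ` in a point `X ≠ P`, and since `P` is the only point of `S`
on `t`, `X ∉ S`. A line of `PG(2,11)` has 12 points, so the 10-secant `ℓ` has exactly two points
outside `S`, namely `Q` and `R`. -/

open scoped LinearAlgebra.Projectivization

namespace Projectivization

variable {K V : Type*} [Field K] [AddCommGroup V] [Module K V]

theorem range_map_subtype (W : Submodule K V) :
    Set.range (map W.subtype W.injective_subtype) = {p : ℙ K V | p.submodule ≤ W} := by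
  ext p
  induction p using ind with | h v hv =>
  simp only [Set.mem_ofPred_eq, submodule_mk, Submodule.span_singleton_le_iff_mem]
  constructor
  · rintro ⟨q, hq⟩
    induction q using ind with | h w hw =>
    rw [map_mk, mk_eq_mk_iff] at hq
    obtain ⟨a, ha⟩ := hq
    exact (W.smul_mem_iff' a).mp (ha ▸ w.2)
  · intro hvW
    exact ⟨mk K ⟨v, hvW⟩ (by simpa using hv), map_mk _ _ _ _⟩

theorem ncard_setOf_submodule_le_of_finrank_eq_two [Finite K] {W : Submodule K V}
    (hW : Module.finrank K W = 2) :
    {p : ℙ K V | p.submodule ≤ W}.ncard = Nat.card K + 1 := by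
  rw [← range_map_subtype, Set.ncard_range_of_injective (map_injective _ _),
    card_of_finrank_two K W hW]

theorem exists_submodule_le_inf [FiniteDimensional K V] {W W' : Submodule K V}
    (h : Module.finrank K V < Module.finrank K W + Module.finrank K W') :
    ∃ p : ℙ K V, p.submodule ≤ W ⊓ W' := by
  have hne : W ⊓ W' ≠ ⊥ := fun hbot =>
    (Submodule.finrank_add_finrank_le_of_disjoint (disjoint_iff.mpr hbot)).not_gt h
  obtain ⟨v, hv, hv0⟩ := Submodule.exists_mem_ne_zero_of_ne_bot hne
  exact ⟨mk K v hv0, by rwa [submodule_mk, Submodule.span_singleton_le_iff_mem]⟩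

end Projectivization

theorem ncard_linePts (L : PGLine) : (linePts L).ncard = 12 := by
  simpa [linePts, PGmem] using
    Projectivization.ncard_setOf_submodule_le_of_finrank_eq_two (V := Fin 3 → ZMod 11) L.2

theorem exists_pgmem_pgmem (L M : PGLine) : ∃ X : PGPoint, PGmem X L ∧ PGmem X M := by
  have hdim : Module.finrank (ZMod 11) (Fin 3 → ZMod 11) < Module.finrank (ZMod 11) L.val +
      Module.finrank (ZMod 11) M.val := by
    rw [L.2, M.2, Module.finrank_fin_fun]
    norm_num
  simpa [PGmem] using Projectivization.exists_submodule_le_inf hdim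

theorem ncard_linePts_sdiff {S : Set PGPoint} {k : ℕ} {L : PGLine} (hL : IsSecant S k L) :
    (linePts L \ S).ncard = 12 - k := by
  have hinter : linePts L ∩ S = secantPts S L := Set.inter_comm _ _
  have hsplit := Set.ncard_inter_add_ncard_sdiff_eq_ncard (linePts L) S (Set.toFinite _)
  rw [hinter, hL, ncard_linePts] at hsplit
  omega

theorem linePts_sdiff_eq_pair {S : Set PGPoint} {L : PGLine} (hL : IsSecant S 10 L)
    {Q R : PGPoint} (hQR : Q ≠ R) (hQL : PGmem Q L) (hRL : PGmem R L) (hQS : Q ∉ S)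
    (hRS : R ∉ S) : linePts L \ S = {Q, R} := by
  refine (Set.eq_of_subset_of_ncard_le ?_ ?_ (Set.toFinite _)).symm
  · rintro X (rfl | rfl)
    exacts [⟨hQL, hQS⟩, ⟨hRL, hRS⟩]
  · rw [ncard_linePts_sdiff hL, Set.ncard_pair hQR]

theorem IsTangent.notMem_of_ne {S : Set PGPoint} {t : PGLine} (ht : IsTangent S t)
    {P X : PGPoint} (hP : P ∈ S) (hPt : PGmem P t) (hXt : PGmem X t) (hXP : X ≠ P) : X ∉ S :=
  fun hX => hXP (((Set.ncard_le_one_iff).mp ht.le) ⟨hX, hXt⟩ ⟨hP, hPt⟩)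

theorem tangent_through_Q_or_R_general (S : Set PGPoint)
    (ℓ : PGLine) (hℓ : IsSecant S 10 ℓ)
    (Q R : PGPoint) (hQR : Q ≠ R)
    (hQℓ : PGmem Q ℓ) (hRℓ : PGmem R ℓ) (hQS : Q ∉ S) (hRS : R ∉ S)
    (P : PGPoint) (hP : P ∈ S) (hPℓ : ¬ PGmem P ℓ)
    (t : PGLine) (hPt : PGmem P t) (ht : IsTangent S t) :
    PGmem Q t ∨ PGmem R t := by
  obtain ⟨X, hXt, hXℓ⟩ := exists_pgmem_pgmem t ℓ
  have hXS : X ∉ S := ht.notMem_of_ne hP hPt hXt (fun h => hPℓ (h ▸ hXℓ))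
  have hX : X ∈ linePts ℓ \ S := ⟨hXℓ, hXS⟩
  rw [linePts_sdiff_eq_pair hℓ hQR hQℓ hRℓ hQS hRS] at hX
  rcases hX with rfl | rfl
  exacts [Or.inl hXt, Or.inr hXt]

theorem tangent_through_Q_or_R (S : Set PGPoint) (hS : IsBlockingSemioval S) (hcard : S.ncard = 25)
    (ℓ : PGLine) (hℓ : IsSecant S 10 ℓ)
    (Q R : PGPoint) (hQR : Q ≠ R)
    (hQℓ : PGmem Q ℓ) (hRℓ : PGmem R ℓ) (hQS : Q ∉ S) (hRS : R ∉ S)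
    (P : PGPoint) (hP : P ∈ S) (hPℓ : ¬ PGmem P ℓ)
    (t : PGLine) (hPt : PGmem P t) (ht : IsTangent S t) :
    PGmem Q t ∨ PGmem R t :=
  tangent_through_Q_or_R_general S ℓ hℓ Q R hQR hQℓ hRℓ hQS hRS P hP hPℓ t hPt ht
end

section
/- Let S be a blocking semioval with exactly 25 points in PG(2,11) such that every line meets S in at most 6 points, and for each i let x_i denote the number of lines of PG(2,11) meeting S in exactly i points. Then x_4 ≡ 2 (mod 3) and x_6 ≥ 9. -/
/-!
Counting the lines of `PG(2,11)` by the size of their intersection with `S` gives the standard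
equations `∑ xᵢ = 133`, `∑ i xᵢ = 25 · 12` and `∑ i (i - 1) xᵢ = 25 · 24`, the sums running over
`1 ≤ i ≤ 6` because `S` blocks every line. A tangent carries exactly one point of `S` and every
point of the semioval lies on exactly one tangent, so `x₁ = 25`. Eliminating `x₂` and `x₃` leaves
`x₄ + 3 x₅ + 6 x₆ = 74`, whence `x₄ ≡ 2 (mod 3)`; together with `x₃ = 3 x₅ + 8 x₆ - 89 ≥ 0` and
`x₄ ≥ 0` this forces `x₆ ≥ 8`, and `x₆ = 8` would need `25 ≤ 3 x₅ ≤ 26`.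

The incidence facts about `PG(2,11)` come from Mathlib's projective plane on `ℙ K (Fin 3 → K)`,
whose lines are again points, `P` lying on `w` when `P ⟂ w`; `perpLine` sends `w` to the plane
`w^⊥`, which turns that incidence into containment of subspaces.
-/
open Finset Module Projectivization Configuration
open scoped LinearAlgebra.Projectivization

section PerpLine

variable {K : Type*} [Field K]

noncomputable def perpLine (w : ℙ K (Fin 3 → K)) :
    {W : Submodule K (Fin 3 → K) // finrank K W = 2} :=
  ⟨LinearMap.ker (dotProductEquiv K (Fin 3) w.rep), by
    have h := Module.Dual.finrank_ker_add_one_of_ne_zero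
      ((dotProductEquiv K (Fin 3)).map_ne_zero_iff.mpr w.rep_nonzero)
    rw [finrank_fin_fun] at h
    omega⟩

theorem orthogonal_iff_dotProduct_rep (v w : ℙ K (Fin 3 → K)) :
    v.orthogonal w ↔ v.rep ⬝ᵥ w.rep = 0 := by
  conv_lhs => rw [← v.mk_rep, ← w.mk_rep]
  rfl

theorem submodule_le_perpLine_iff (P w : ℙ K (Fin 3 → K)) :
    P.submodule ≤ (perpLine w).1 ↔ P ∈ w := by
  rw [ofField.mem_iff, orthogonal_iff_dotProduct_rep, submodule_eq,
    Submodule.span_singleton_le_iff_mem, dotProduct_comm]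
  rfl

theorem perpLine_injective : Function.Injective (perpLine (K := K)) := by
  intro v w hvw
  have hker : ⨅ _ : Unit, LinearMap.ker (dotProductEquiv K (Fin 3) w.rep) ≤
      LinearMap.ker (dotProductEquiv K (Fin 3) v.rep) := by
    rw [iInf_const]; exact (congrArg Subtype.val hvw).ge
  obtain ⟨a, ha⟩ := Submodule.mem_span_singleton.mp
    (by simpa using mem_span_of_iInf_ker_le_ker hker)
  rw [← v.mk_rep, ← w.mk_rep, mk_eq_mk_iff']
  exact ⟨a, (dotProductEquiv K (Fin 3)).injective (by rw [map_smul, ha])⟩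

theorem perpLine_surjective : Function.Surjective (perpLine (K := K)) := by
  rintro ⟨W, hW⟩
  have hlt : W < ⊤ := lt_top_iff_ne_top.mpr fun h => by
    rw [h, finrank_top, finrank_fin_fun] at hW
    omega
  obtain ⟨f, hf, hWf⟩ := W.exists_le_ker_of_lt_top hlt
  set u := (dotProductEquiv K (Fin 3)).symm f
  have hu : u ≠ 0 := by simpa [u] using hf
  obtain ⟨a, ha⟩ := exists_smul_eq_mk_rep K u hu
  refine ⟨mk K u hu, Subtype.ext (Submodule.eq_of_le_of_finrank_eq ?_ ?_).symm⟩
  · intro x hx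
    have hfx : u ⬝ᵥ x = 0 := by
      change dotProductEquiv K (Fin 3) u x = 0
      rw [LinearEquiv.apply_symm_apply]; exact hWf hx
    change (mk K u hu).rep ⬝ᵥ x = 0
    rw [← ha, Units.smul_def, smul_dotProduct, hfx, smul_zero]
  · rw [hW, (perpLine _).2]

noncomputable def perpLineEquiv :
    ℙ K (Fin 3 → K) ≃ {W : Submodule K (Fin 3 → K) // finrank K W = 2} :=
  Equiv.ofBijective perpLine ⟨perpLine_injective, perpLine_surjective⟩

end PerpLine

noncomputable instance : Fintype PGPoint := Fintype.ofFinite _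

noncomputable instance : Fintype PGLine := Fintype.ofEquiv _ perpLineEquiv

theorem PGmem_perpLine_iff (P w : PGPoint) : PGmem P (perpLine w) ↔ P ∈ w :=
  submodule_le_perpLine_iff P w

theorem card_PGPoint : Fintype.card PGPoint = 133 := by
  rw [Fintype.card_eq_nat_card, card_of_finrank (ZMod 11) _ (finrank_fin_fun _)]
  simp [Finset.sum_range_succ]

theorem card_PGLine : Fintype.card PGLine = 133 := by
  rw [← Fintype.card_congr perpLineEquiv, card_PGPoint]

theorem order_PGPoint : ProjectivePlane.order PGPoint PGPoint = 11 := by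
  have h := ProjectivePlane.card_points PGPoint PGPoint
  rw [card_PGPoint] at h
  nlinarith

theorem card_filter_PGmem (P : PGPoint) [DecidablePred (PGmem P)] : #{L | PGmem P L} = 12 := by
  have e : {w : PGPoint // P ∈ w} ≃ {L : PGLine // PGmem P L} :=
    perpLineEquiv.subtypeEquiv fun w => (PGmem_perpLine_iff P w).symm
  rw [← Fintype.card_subtype, Fintype.card_eq_nat_card, ← Nat.card_congr e, ← lineCount,
    ProjectivePlane.lineCount_eq, order_PGPoint]

theorem existsUnique_PGLine {P Q : PGPoint} (h : P ≠ Q) : ∃! L, PGmem P L ∧ PGmem Q L := by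
  refine ⟨perpLine (HasLines.mkLine h),
    by simpa only [PGmem_perpLine_iff] using HasLines.mkLine_ax h, ?_⟩
  rintro L ⟨hP, hQ⟩
  obtain ⟨w, rfl⟩ := perpLine_surjective L
  rw [PGmem_perpLine_iff] at hP hQ
  exact congrArg perpLine ((Nondegenerate.eq_or_eq hP hQ (HasLines.mkLine_ax h).1
    (HasLines.mkLine_ax h).2).resolve_left h)

section DoubleCounting

variable {α β : Type*} [Fintype β] (r : α → β → Prop) [DecidableRel r] (s : Finset α)

theorem sum_card_filter_rel_eq_card_mul {d : ℕ} (h : ∀ a ∈ s, #{b | r a b} = d) :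
    ∑ b, #{a ∈ s | r a b} = #s * d := calc
  ∑ b, #{a ∈ s | r a b} = ∑ a ∈ s, #{b | r a b} :=
    (sum_card_bipartiteAbove_eq_sum_card_bipartiteBelow r).symm
  _ = #s * d := by rw [sum_congr rfl h, sum_const, smul_eq_mul]

theorem sum_card_filter_rel_mul_pred
    (h : ∀ a ∈ s, ∀ a' ∈ s, a ≠ a' → ∃! b, r a b ∧ r a' b) :
    ∑ b, #{a ∈ s | r a b} * (#{a ∈ s | r a b} - 1) = #s * (#s - 1) := by
  have hpairs := sum_card_filter_rel_eq_card_mul (fun p b => r p.1 b ∧ r p.2 b) s.offDiag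
    (d := 1) fun p hp => by
      obtain ⟨ha, ha', hne⟩ := mem_offDiag.mp hp
      exact (Fintype.existsUnique_iff_card_one _).mp (h _ ha _ ha' hne)
  have hfilter : ∀ b, {p ∈ s.offDiag | r p.1 b ∧ r p.2 b} = {a ∈ s | r a b}.offDiag := by
    intro b; ext p; simp only [mem_filter, mem_offDiag]; tauto
  simp only [hfilter, offDiag_card, mul_one] at hpairs
  simpa only [Nat.mul_sub_one] using hpairs

theorem card_filter_card_filter_eq_one
    (h : ∀ a ∈ s, ∃! b, r a b ∧ #{a ∈ s | r a b} = 1) :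
    #{b | #{a ∈ s | r a b} = 1} = #s := by
  set T : Finset β := {b | #{a ∈ s | r a b} = 1}
  calc #T = ∑ b ∈ T, #{a ∈ s | r a b} := by
        rw [sum_congr rfl fun b hb => (mem_filter.mp hb).2, sum_const, smul_eq_mul, mul_one]
    _ = ∑ a ∈ s, #{b ∈ T | r a b} :=
        (sum_card_bipartiteAbove_eq_sum_card_bipartiteBelow r).symm
    _ = ∑ a ∈ s, 1 := sum_congr rfl fun a ha => by
        rw [card_eq_one_iff_existsUnique]
        simpa only [T, mem_filter, mem_univ, true_and, and_comm] using h a ha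
    _ = #s := by rw [sum_const, smul_eq_mul, mul_one]

theorem sum_comp_eq_sum_card_fiber_mul {n : β → ℕ} {t : Finset ℕ} (ht : ∀ b, n b ∈ t)
    (f : ℕ → ℕ) : ∑ b, f (n b) = ∑ i ∈ t, #{b | n b = i} * f i := by
  rw [← sum_fiberwise_of_maps_to fun b _ => ht b]
  refine sum_congr rfl fun i _ => ?_
  rw [sum_congr rfl fun b hb => by rw [(mem_filter.mp hb).2], sum_const, smul_eq_mul]

end DoubleCounting

theorem x4_mod_three_and_x6_lower_bound (S : Set PGPoint) (hS : IsBlockingSemioval S) (hcard : S.ncard = 25)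
    (hmax : ∀ L : PGLine, (secantPts S L).ncard ≤ 6)
    (x : ℕ → ℕ) (hx : ∀ i, x i = ({L : PGLine | IsSecant S i L}).ncard) :
    x 4 % 3 = 2 ∧ 9 ≤ x 6 := by
  classical
  obtain ⟨⟨hblock, -⟩, hsemi⟩ := hS
  set s := S.toFinset
  set n : PGLine → ℕ := fun L => #{P ∈ s | PGmem P L}
  have hn : ∀ L, (secantPts S L).ncard = n L := fun L => by
    rw [show secantPts S L = ↑{P ∈ s | PGmem P L} by ext; simp [secantPts, s],
      Set.ncard_coe_finset]
  have hs : #s = 25 := by rwa [← Set.ncard_eq_toFinset_card']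
  have hxn : ∀ i, x i = #{L | n L = i} := fun i => by
    rw [hx, ← Set.ncard_coe_finset]; congr; ext; simp [IsSecant, hn]
  have hrange : ∀ L, n L ∈ Icc 1 6 := fun L => mem_Icc.mpr
    ⟨hn L ▸ (Set.ncard_pos (Set.toFinite _)).mpr (hblock L), hn L ▸ hmax L⟩
  have hlines := sum_comp_eq_sum_card_fiber_mul hrange fun _ => 1
  have hflags := sum_comp_eq_sum_card_fiber_mul hrange fun i => i
  have hpairs := sum_comp_eq_sum_card_fiber_mul hrange fun i => i * (i - 1)
  rw [sum_const, card_univ, card_PGLine] at hlines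
  rw [sum_card_filter_rel_eq_card_mul PGmem s fun P _ => card_filter_PGmem P] at hflags
  rw [sum_card_filter_rel_mul_pred PGmem s fun P _ Q _ => existsUnique_PGLine] at hpairs
  have htangents : x 1 = 25 := by
    rw [hxn, card_filter_card_filter_eq_one PGmem s, hs]
    intro P hP
    simpa only [IsTangent, IsSecant, hn] using hsemi P (Set.mem_toFinset.mp hP)
  simp only [smul_eq_mul, mul_one, ← hxn, Nat.reduceAdd, Nat.one_le_ofNat, sum_Icc_succ_top,
    Icc_self, sum_singleton, hs, Nat.reduceMul, Nat.add_one_sub_one, tsub_self, mul_zero, zero_add]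
    at hlines hflags hpairs
  omega
end
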